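/- arXiv:math/0204071 — 4 statements merged into one kernel-verified Lean document; each statement's English description precedes it below -/
import Mathlib

section
/- Let G be a group and N a normal subgroup of G. Suppose that neither N nor the quotient group G/N admits a surjective group homomorphism onto ℱ_∞ (the free group on a countably infinite set of generators). Then G does not admit a surjective group homomorphism onto ℱ_∞. -/
/-!
Let `f : G →* F` be onto the free group `F` of countably infinite rank. If `f` kills `N` it
factors through `G ⧸ N`. Otherwise `K = f(N)` is a nontrivial normal subgroup of `F`, and it is
free by Nielsen–Schreier. If `K` has infinite rank it maps onto `F`, hence so does `N`. If `K` had
finite rank, its generators would involve only finitely many letters; conjugating a nontrivial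
element of `K` by a letter outside them produces a reduced word leaving that alphabet, yet it must
stay in the normal subgroup `K`.
-/

namespace FreeGroup

variable {α : Type*}

theorem isReduced_cons_append_singleton {L : List (α × Bool)} {b c : α × Bool}
    (hL : IsReduced L) (hne : L ≠ []) (hb : ∀ p ∈ L, p.1 ≠ b.1) (hc : ∀ p ∈ L, p.1 ≠ c.1) :
    IsReduced (b :: L ++ [c]) := by
  obtain ⟨d, L', rfl⟩ := List.exists_cons_of_ne_nil hne
  refine IsReduced.append_overlap (L₁ := [b]) ?_ ?_ hne
  · exact isReduced_cons_cons.2 ⟨fun h => absurd h.symm (hb d (by simp)), hL⟩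
  · refine List.IsChain.append hL (List.isChain_singleton _) ?_
    intro p hp q hq
    simp only [Option.mem_def, List.head?_cons, Option.some.injEq] at hq
    subst hq
    exact fun h => absurd h (hc p (List.mem_of_mem_getLast? hp))

section DecidableEq

variable [DecidableEq α]

def wordsOver (s : Set α) : Subgroup (FreeGroup α) where
  carrier := {x | ∀ p ∈ x.toWord, p.1 ∈ s}
  one_mem' := by simp
  mul_mem' {x y} hx hy p hp := by
    rcases List.mem_append.1 ((toWord_mul_sublist x y).subset hp) with h | h
    exacts [hx p h, hy p h]
  inv_mem' {x} hx p hp := by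
    obtain ⟨q, hq, rfl⟩ : ∃ q ∈ x.toWord, (q.1, !q.2) = p := by
      simpa [toWord_inv, invRev] using hp
    exact hx q hq

theorem toWord_conj_of {a : α} {x : FreeGroup α} (hx : x ≠ 1) (ha : ∀ p ∈ x.toWord, p.1 ≠ a) :
    (of a * x * (of a)⁻¹).toWord = (a, true) :: x.toWord ++ [(a, false)] := by
  have hmk : of a * x * (of a)⁻¹ = mk ((a, true) :: x.toWord ++ [(a, false)]) := by
    rw [← mk_toWord (x := x), of, inv_mk, mul_mk, mul_mk]
    simp [invRev]
  rw [hmk, toWord_mk, IsReduced.reduce_eq]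
  exact isReduced_cons_append_singleton isReduced_toWord (mt toWord_eq_nil_iff.1 hx) ha ha

theorem conj_of_notMem_wordsOver {s : Set α} {a : α} (ha : a ∉ s) {x : FreeGroup α}
    (hx : x ∈ wordsOver s) (hx1 : x ≠ 1) : of a * x * (of a)⁻¹ ∉ wordsOver s := by
  intro h
  have ha' : ∀ p ∈ x.toWord, p.1 ≠ a := fun p hp hpa => ha (hpa ▸ hx p hp)
  exact ha (h (a, true) (by simp [toWord_conj_of hx1 ha']))

end DecidableEq

theorem not_fg_of_normal_of_ne_bot [Infinite α] {K : Subgroup (FreeGroup α)} [K.Normal]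
    (hK : K ≠ ⊥) : ¬ K.FG := by
  classical
  obtain ⟨x, hxK, hx1⟩ := K.bot_or_exists_ne_one.resolve_left hK
  rintro ⟨S, rfl⟩
  set s : Set α := ⋃ w ∈ S, {a | ∃ p ∈ w.toWord, p.1 = a}
  have hs : s.Finite := S.finite_toSet.biUnion fun w _ => w.toWord.finite_toSet.image Prod.fst
  have hle : Subgroup.closure (S : Set (FreeGroup α)) ≤ wordsOver s :=
    (Subgroup.closure_le _).2 fun w hw p hp => Set.mem_biUnion hw ⟨p, hp, rfl⟩
  obtain ⟨a, ha⟩ := hs.exists_notMem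
  exact conj_of_notMem_wordsOver ha (hle hxK) hx1 (hle (‹Subgroup.Normal _›.conj_mem x hxK _))

end FreeGroup

theorem IsFreeGroup.fg_or_exists_surjective_freeGroup_nat (H : Type*) [Group H] [IsFreeGroup H] :
    Group.FG H ∨ ∃ f : H →* FreeGroup ℕ, Function.Surjective f := by
  rcases finite_or_infinite (Generators H) with hfin | hinf
  · exact .inl (Group.fg_of_surjective (f := (mulEquiv H).toMonoidHom) (mulEquiv H).surjective)
  · let e := Infinite.natEmbedding (Generators H)
    refine .inr ⟨(FreeGroup.map (Function.invFun e)).comp (toFreeGroup H).toMonoidHom, ?_⟩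
    exact (FreeGroup.map_surjective (Function.invFun_surjective e.injective)).comp
      (toFreeGroup H).surjective

/-- **Lemma 2.3.** If a group `G` has a normal subgroup `N` such that neither `N` nor the
quotient `G/N` admits a surjective homomorphism onto the free group `ℱ_∞` on countably many
generators, then `G` does not admit a surjective homomorphism onto `ℱ_∞`. -/
theorem no_surj_onto_free_group_of_normal_of_quotient
    (G : Type*) [Group G] (N : Subgroup G) [N.Normal]
    (hN : ¬ ∃ f : N →* FreeGroup ℕ, Function.Surjective f)
    (hQ : ¬ ∃ f : G ⧸ N →* FreeGroup ℕ, Function.Surjective f) :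
    ¬ ∃ f : G →* FreeGroup ℕ, Function.Surjective f := by
  rintro ⟨f, hf⟩
  by_cases hker : N ≤ f.ker
  · exact hQ ⟨QuotientGroup.lift N f hker, QuotientGroup.lift_surjective_of_surjective N f hf hker⟩
  set K := N.map f
  have : K.Normal := Subgroup.Normal.map ‹_› f hf
  rcases IsFreeGroup.fg_or_exists_surjective_freeGroup_nat K with hfg | ⟨φ, hφ⟩
  · exact FreeGroup.not_fg_of_normal_of_ne_bot (mt (Subgroup.map_eq_bot_iff N).1 hker)
      ((Group.fg_iff_subgroup_fg K).1 hfg)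
  · exact hN ⟨φ.comp (f.subgroupMap N), hφ.comp (f.subgroupMap_surjective N)⟩
end

section
/- Every finitely generated normal subgroup of ℱ_∞, the free group on a countably infinite set of generators, is trivial. -/
/-!
The finitely many generators of `N` use only finitely many letters, so with infinitely many
letters available some letter `a` occurs in no reduced word of an element of `N`. For
`1 ≠ w ∈ N` the reduced word of `a w a⁻¹` is `a · w · a⁻¹` itself, since no cancellation can
occur against a word avoiding `a`. It contains `a`, yet lies in `N` by normality.
-/

namespace FreeGroup

variable {α : Type*} [DecidableEq α]

def letters (x : FreeGroup α) : Finset α :=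
  (x.toWord.map Prod.fst).toFinset

theorem mem_letters {x : FreeGroup α} {a : α} : a ∈ x.letters ↔ ∃ b, (a, b) ∈ x.toWord := by
  simp [letters]

theorem letters_mul_subset (x y : FreeGroup α) : (x * y).letters ⊆ x.letters ∪ y.letters := by
  intro a ha
  obtain ⟨b, hb⟩ := mem_letters.mp ha
  simpa only [Finset.mem_union, mem_letters, ← exists_or, ← List.mem_append]
    using ⟨b, (toWord_mul_sublist x y).subset hb⟩

@[simp]
theorem letters_inv (x : FreeGroup α) : x⁻¹.letters = x.letters := by
  ext a
  simp [mem_letters, toWord_inv, invRev, or_comm]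

def avoiding (a : α) : Subgroup (FreeGroup α) where
  carrier := {x | a ∉ x.letters}
  one_mem' := by simp [letters]
  mul_mem' {x y} hx hy h := by
    rcases Finset.mem_union.mp (letters_mul_subset x y h) with h | h
    exacts [hx h, hy h]
  inv_mem' {x} hx := by simpa using hx

theorem mem_avoiding {a : α} {x : FreeGroup α} : x ∈ avoiding a ↔ a ∉ x.letters := Iff.rfl

theorem toWord_of_mul_mul_inv_of {a : α} {w : FreeGroup α} (hw : w ≠ 1) (ha : w ∈ avoiding a) :
    (of a * w * (of a)⁻¹).toWord = (a, true) :: w.toWord ++ [(a, false)] := by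
  have hL : ∀ p ∈ w.toWord, p.1 ≠ a := fun p hp h =>
    ha (mem_letters.mpr ⟨p.2, h ▸ hp⟩)
  have hred : IsReduced ((a, true) :: w.toWord ++ [(a, false)]) := by
    refine IsReduced.append_overlap (L₁ := [(a, true)]) ?_ ?_ (mt toWord_eq_nil_iff.mp hw)
    · refine List.isChain_cons.mpr ⟨fun p hp h => absurd h.symm (hL p (List.mem_of_mem_head? hp)),
        isReduced_toWord⟩
    · refine List.isChain_append.mpr ⟨isReduced_toWord, List.isChain_singleton _,
        fun p hp q hq h => ?_⟩
      simp only [List.head?_cons, Option.mem_def, Option.some.injEq] at hq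
      subst hq
      exact absurd h (hL p (List.mem_of_mem_getLast? hp))
  have hmk : of a * w * (of a)⁻¹ = mk ([(a, true)] ++ w.toWord ++ [(a, false)]) := by
    rw [← mul_mk, ← mul_mk, mk_toWord]
    rfl
  rw [hmk, toWord_mk]
  exact hred.reduce_eq

theorem of_mul_mul_inv_of_notMem_avoiding {a : α} {w : FreeGroup α} (hw : w ≠ 1)
    (ha : w ∈ avoiding a) : of a * w * (of a)⁻¹ ∉ avoiding a := by
  rw [mem_avoiding, not_not, mem_letters, toWord_of_mul_mul_inv_of hw ha]
  exact ⟨true, by simp⟩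

theorem eq_bot_of_le_avoiding {N : Subgroup (FreeGroup α)} [N.Normal] {a : α}
    (hN : N ≤ avoiding a) : N = ⊥ := by
  refine (Subgroup.eq_bot_iff_forall N).mpr fun w hw => ?_
  by_contra hw1
  exact of_mul_mul_inv_of_notMem_avoiding hw1 (hN hw) (hN (Subgroup.Normal.conj_mem ‹_› w hw _))

theorem closure_le_avoiding {S : Finset (FreeGroup α)} {a : α}
    (ha : a ∉ S.biUnion letters) : Subgroup.closure (S : Set (FreeGroup α)) ≤ avoiding a :=
  (Subgroup.closure_le _).mpr fun s hs has => ha (Finset.mem_biUnion.mpr ⟨s, hs, has⟩)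

theorem eq_bot_of_normal_of_fg [Infinite α] (N : Subgroup (FreeGroup α)) [N.Normal]
    (hN : N.FG) : N = ⊥ := by
  obtain ⟨S, rfl⟩ := hN
  obtain ⟨a, ha⟩ := Infinite.exists_notMem_finset (S.biUnion letters)
  exact eq_bot_of_le_avoiding (closure_le_avoiding ha)

end FreeGroup

/-- Every finitely generated normal subgroup of the free group on countably infinitely many
generators is trivial. -/
theorem fg_normal_subgroup_of_infinite_free_group_eq_bot
    (N : Subgroup (FreeGroup ℕ)) [N.Normal] (hfg : Group.FG N) :
    N = ⊥ :=
  FreeGroup.eq_bot_of_normal_of_fg N ((Group.fg_iff_subgroup_fg N).mp hfg)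
end

section
/- Let B be a finitely generated abelian group and ρ : B → ℂ* a nontrivial group homomorphism. Let ℂ_ρ denote the one-dimensional complex representation of B on ℂ in which b ∈ B acts by multiplication by ρ(b). Then the second group cohomology H²(B, ℂ_ρ) vanishes. -/
/-- The one-dimensional representation of a group `B` on `ℂ` in which `b` acts by
multiplication by `ρ b`. -/
noncomputable def charRep (B : Type) [Group B] (ρ : B →* ℂˣ) : Rep ℂ B :=
  Rep.of
    { toFun := fun b => (ρ b : ℂ) • (LinearMap.id : ℂ →ₗ[ℂ] ℂ)
      map_one' := by simp; rfl
      map_mul' := fun g h => by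
        ext
        simp [mul_smul, mul_comm] }

/-! A central element `b` acts trivially on `H²(G, A)`: for a 2-cocycle `f`, the coboundary of the
1-cochain `x ↦ f (x, b) - f (b, x)` is `(1 - ρ b) ∘ f`. Hence if `1 - ρ b` is invertible, every
2-cocycle is a coboundary. On `ℂ_ρ`, `1 - ρ b` is multiplication by the nonzero scalar `1 - ρ(b)`
for any `b` with `ρ(b) ≠ 1`. -/

open groupCohomology

universe u

section

variable {k G : Type u} [CommRing k]

theorem d₁₂_hom_comp_of_commute [Group G] {A : Rep k G} {T : A →ₗ[k] A}
    (hT : ∀ g, Commute T (A.ρ g)) (φ : G → A) :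
    (d₁₂ A).hom (T ∘ φ) = T ∘ (d₁₂ A).hom φ := by
  ext ⟨g, h⟩
  simp only [d₁₂_hom_apply, Function.comp_apply, map_add, map_sub,
    ← Module.End.mul_apply, (hT g).eq]

section

variable [CommGroup G] {A : Rep k G}

theorem d₁₂_hom_sub_swap (f : cocycles₂ A) (b : G) :
    (d₁₂ A).hom (fun x => f (x, b) - f (b, x)) = ⇑(1 - A.ρ b) ∘ ⇑f := by
  funext ⟨g, h⟩
  have hf := (mem_cocycles₂_def (f : G × G → A)).1 f.2
  have h₁ := hf g h b
  have h₂ := hf g b h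
  have h₃ := hf b g h
  rw [mul_comm h b] at h₁
  rw [mul_comm g b] at h₂
  rw [d₁₂_hom_apply, Function.comp_apply, LinearMap.sub_apply, Module.End.one_apply,
    map_sub (A.ρ g)]
  linear_combination (norm := abel) h₁ - h₂ + h₃

theorem mem_coboundaries₂_of_isUnit_one_sub {b : G} (hb : IsUnit (1 - A.ρ b)) (f : cocycles₂ A) :
    ⇑f ∈ coboundaries₂ A := by
  obtain ⟨u, hu⟩ := hb
  have hcomm : ∀ g, Commute u.val (A.ρ g) := fun g =>
    hu ▸ (Commute.one_left _).sub_left (by simp [Commute, SemiconjBy, ← map_mul, mul_comm b g])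
  refine ⟨u⁻¹.val ∘ fun x => f (x, b) - f (b, x), ?_⟩
  rw [d₁₂_hom_comp_of_commute (fun g => (hcomm g).units_inv_left), d₁₂_hom_sub_swap, ← hu]
  ext p
  exact LinearMap.congr_fun u.inv_mul (f p)

theorem subsingleton_H2_of_isUnit_one_sub {b : G} (hb : IsUnit (1 - A.ρ b)) : Subsingleton (H2 A) :=
  subsingleton_of_forall_eq 0 fun x => by
    induction x using H2_induction_on with
    | h f => exact (H2π_eq_zero_iff f).2 (mem_coboundaries₂_of_isUnit_one_sub hb f)

end

end

theorem charRep_ρ_apply {B : Type} [Group B] (ρ : B →* ℂˣ) (b : B) :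
    (charRep B ρ).ρ b = (ρ b : ℂ) • LinearMap.id :=
  rfl

theorem isUnit_one_sub_charRep_ρ {B : Type} [Group B] {ρ : B →* ℂˣ} {b : B} (hb : ρ b ≠ 1) :
    IsUnit (1 - (charRep B ρ).ρ b) := by
  have hc : (1 : ℂ) - ρ b ≠ 0 := sub_ne_zero.2 (Ne.symm (Units.val_eq_one.not.2 hb))
  rw [charRep_ρ_apply, ← Module.End.one_eq_id, ← Algebra.algebraMap_eq_smul_one,
    ← map_one (algebraMap ℂ _), ← map_sub]
  exact (isUnit_iff_ne_zero.2 hc).map _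

theorem groupCohomology_two_eq_zero_of_nontrivial_char_general
    (B : Type) [CommGroup B] (ρ : B →* ℂˣ) (hρ : ρ ≠ 1) :
    Subsingleton (groupCohomology (charRep B ρ) 2) := by
  obtain ⟨b, hb⟩ := DFunLike.ne_iff.1 hρ
  exact subsingleton_H2_of_isUnit_one_sub (isUnit_one_sub_charRep_ρ hb)

/-- If `B` is a finitely generated abelian group and `ρ : B → ℂ*` is a nontrivial character,
then the second group cohomology of `B` with coefficients in `ℂ_ρ` vanishes. -/
theorem groupCohomology_two_eq_zero_of_nontrivial_char
    (B : Type) [CommGroup B] [Group.FG B] (ρ : B →* ℂˣ) (hρ : ρ ≠ 1) :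
    Subsingleton (groupCohomology (charRep B ρ) 2) :=
  groupCohomology_two_eq_zero_of_nontrivial_char_general B ρ hρ
end

section
/- Let B be a finitely generated abelian group and ρ : B → ℂ* a nontrivial group homomorphism. Let R be a group containing a normal subgroup V together with a group isomorphism ι : (ℂ, +) ≅ V, such that the quotient map π : R → R/V composed with an isomorphism R/V ≅ B gives a surjection q : R → B, and such that conjugation is given by the character ρ: for all r ∈ R and z ∈ ℂ, r·ι(z)·r⁻¹ = ι(ρ(q(r))·z). Then the extension splits: there exists a group homomorphism s : B → R with q ∘ s = id_B; consequently R is isomorphic to the semidirect product ℂ ⋊_ρ B with multiplication (v₁, g₁)·(v₂, g₂) = (v₁ + ρ(g₁)·v₂, g₁·g₂). -/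
/-!
Choose `t ∈ R` with `λ = ρ (q t) ≠ 1`. Conjugation by `t` acts on `ℂ` as multiplication by `λ`,
and since `B` is abelian every commutator `t x t⁻¹ x⁻¹` lies in `ℂ`. As `1 - λ` is invertible,
each fibre of `q` then contains exactly one element commuting with `t`, so the centralizer of `t`
is a complement of `ℂ`: it is the image of a splitting. A split extension is the semidirect
product for the conjugation action, which here is `ρ`.
-/

/-- The action of `B` on the additive group `ℂ` (written multiplicatively) in which
`b ∈ B` acts by multiplication by `ρ b`. -/
noncomputable def charAut (B : Type) [Group B] (ρ : B →* ℂˣ) : B →* MulAut (Multiplicative ℂ) where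
  toFun b := AddEquiv.toMultiplicative ((DistribMulAction.toAddAut ℂˣ ℂ) (ρ b))
  map_one' := by ext x; simp
  map_mul' g h := by ext x; simp [mul_smul]

namespace GroupExtension

variable {N E : Type*} [Group N] [Group E]

noncomputable def Splitting.ofBijectiveDomRestrict {G : Type*} [Group G]
    (S : GroupExtension N E G) (H : Subgroup E)
    (hH : Function.Bijective (S.rightHom.domRestrict H)) : S.Splitting where
  toMonoidHom := H.subtype.comp (MulEquiv.ofBijective _ hH).symm.toMonoidHom
  rightInverse_rightHom g := (MulEquiv.ofBijective _ hH).apply_symm_apply g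

theorem conjAct_eq_iff_inl_conj {G : Type*} [Group G] (S : GroupExtension N E G) {e : E}
    {n m : N} : S.conjAct e n = m ↔ e * S.inl n * e⁻¹ = S.inl m := by
  rw [← S.inl_conjAct_comm, S.inl_injective.eq_iff]

/- In the fibre of `x`, the element `inl n * x` commutes with `t` exactly when `(t n t⁻¹)⁻¹ n` is
the commutator `t x t⁻¹ x⁻¹`, which lies in `N` because `G` is abelian. -/
theorem bijective_domRestrict_centralizer {G : Type*} [CommGroup G] (S : GroupExtension N E G)
    (t : E) (ht : Function.Bijective fun n => (S.conjAct t n)⁻¹ * n) :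
    Function.Bijective (S.rightHom.domRestrict (Subgroup.centralizer {t})) := by
  have mem_iff (x : E) : x ∈ Subgroup.centralizer {t} ↔ t * x * t⁻¹ = x := by
    rw [Subgroup.mem_centralizer_singleton_iff, mul_inv_eq_iff_eq_mul, eq_comm]
  have conj_inl_mul (n : N) (x : E) :
      t * (S.inl n * x) * t⁻¹ = S.inl (S.conjAct t n) * (t * x * t⁻¹) := by
    rw [S.inl_conjAct_comm]; group
  constructor
  · rw [injective_iff_map_eq_one]
    rintro ⟨y, hy⟩ hqy
    obtain ⟨n, rfl⟩ : y ∈ S.inl.range := by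
      rw [S.range_inl_eq_ker_rightHom]
      exact hqy
    have hfix : S.conjAct t n = n := by
      rw [conjAct_eq_iff_inl_conj]; exact (mem_iff _).mp hy
    have hn : n = 1 := ht.1 (by simp only [hfix, inv_mul_cancel, map_one, inv_one, mul_one])
    ext
    simp [hn]
  · intro g
    obtain ⟨x, rfl⟩ := S.rightHom_surjective g
    obtain ⟨m, hm⟩ : t * x * t⁻¹ * x⁻¹ ∈ S.inl.range := by
      rw [S.range_inl_eq_ker_rightHom, MonoidHom.mem_ker]
      simp only [map_mul, map_inv, mul_comm (S.rightHom t)]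
      group
    obtain ⟨n, hn⟩ := ht.2 m
    refine ⟨⟨S.inl n * x, (mem_iff _).mpr ?_⟩, by simp⟩
    have hconj : t * x * t⁻¹ = S.inl m * x := by rw [hm]; group
    rw [conj_inl_mul, hconj, ← mul_assoc, ← map_mul, ← hn, mul_inv_cancel_left]

end GroupExtension

theorem bijective_inv_charAut_mul {B : Type} [Group B] (ρ : B →* ℂˣ) {b : B} (hb : ρ b ≠ 1) :
    Function.Bijective fun n => (charAut B ρ b n)⁻¹ * n := by
  have hρb : (1 - ρ b : ℂ) ≠ 0 := sub_ne_zero.mpr fun h => hb (Units.ext h.symm)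
  have h : (fun n => (charAut B ρ b n)⁻¹ * n) =
      Multiplicative.ofAdd ∘ (fun z : ℂ => (1 - ρ b : ℂ) * z) ∘ Multiplicative.toAdd := by
    ext n
    show -((ρ b : ℂ) * n.toAdd) + n.toAdd = (1 - ρ b : ℂ) * n.toAdd
    ring
  rw [h]
  exact Multiplicative.ofAdd.bijective.comp
    ((mulLeft_bijective₀ _ hρb).comp Multiplicative.toAdd.bijective)

theorem GroupExtension.conjAct_eq_charAut_comp {B R : Type} [Group B] [Group R] (ρ : B →* ℂˣ)
    (S : GroupExtension (Multiplicative ℂ) R B)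
    (hconj : ∀ (r : R) (z : ℂ), r * S.inl (Multiplicative.ofAdd z) * r⁻¹ =
      S.inl (Multiplicative.ofAdd ((ρ (S.rightHom r) : ℂ) * z))) :
    S.conjAct = (charAut B ρ).comp S.rightHom := by
  ext r z
  obtain ⟨z, rfl⟩ := Multiplicative.ofAdd.surjective z
  exact S.conjAct_eq_iff_inl_conj.mpr (hconj r z)

theorem extension_by_nontrivial_char_splits_general
    (B : Type) [CommGroup B] (ρ : B →* ℂˣ) (hρ : ρ ≠ 1)
    (R : Type) [Group R] (ι : Multiplicative ℂ →* R) (hinj : Function.Injective ι)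
    (q : R →* B) (hsurj : Function.Surjective q) (hker : q.ker = ι.range)
    (hconj : ∀ (r : R) (z : ℂ),
      r * ι (Multiplicative.ofAdd z) * r⁻¹ = ι (Multiplicative.ofAdd ((ρ (q r) : ℂ) * z))) :
    (∃ s : B →* R, q.comp s = MonoidHom.id B) ∧
      Nonempty (R ≃* (Multiplicative ℂ ⋊[charAut B ρ] B)) := by
  let S : GroupExtension (Multiplicative ℂ) R B := ⟨ι, q, hinj, hker.symm, hsurj⟩
  have hS : S.conjAct = (charAut B ρ).comp q := S.conjAct_eq_charAut_comp ρ hconj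
  obtain ⟨b, hb⟩ : ∃ b, ρ b ≠ 1 := by
    by_contra! h
    exact hρ (MonoidHom.ext h)
  obtain ⟨t, rfl⟩ := hsurj b
  have hcompl := S.bijective_domRestrict_centralizer t (by
    simpa only [hS, MonoidHom.comp_apply] using bijective_inv_charAut_mul ρ hb)
  let s := GroupExtension.Splitting.ofBijectiveDomRestrict S _ hcompl
  have hs : s.conjAct = charAut B ρ := by
    ext g : 1
    rw [GroupExtension.Splitting.conjAct, MonoidHom.comp_apply, hS, MonoidHom.comp_apply]
    exact congrArg (charAut B ρ) (s.rightHom_splitting g)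
  exact ⟨⟨s, s.rightHom_comp_splitting⟩, ⟨hs ▸ s.semidirectProductMulEquiv.symm⟩⟩

/-- Let `B` be a finitely generated abelian group and `ρ : B → ℂ*` a nontrivial character.
If `R` is an extension of `B` by the additive group `ℂ` in which conjugation acts through
`ρ`, then the extension splits, and `R` is isomorphic to the semidirect product `ℂ ⋊_ρ B`. -/
theorem extension_by_nontrivial_char_splits
    (B : Type) [CommGroup B] [Group.FG B] (ρ : B →* ℂˣ) (hρ : ρ ≠ 1)
    (R : Type) [Group R] (ι : Multiplicative ℂ →* R) (hinj : Function.Injective ι)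
    (hnorm : ι.range.Normal)
    (q : R →* B) (hsurj : Function.Surjective q) (hker : q.ker = ι.range)
    (hconj : ∀ (r : R) (z : ℂ),
      r * ι (Multiplicative.ofAdd z) * r⁻¹ = ι (Multiplicative.ofAdd ((ρ (q r) : ℂ) * z))) :
    (∃ s : B →* R, q.comp s = MonoidHom.id B) ∧
      Nonempty (R ≃* (Multiplicative ℂ ⋊[charAut B ρ] B)) :=
  extension_by_nontrivial_char_splits_general B ρ hρ R ι hinj q hsurj hker hconj
end
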